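/- arXiv:1908.06779 — 7 statements merged into one kernel-verified Lean document; each statement's English description precedes it below -/
import Mathlib

section
/- Let x_i, x_j ∈ ℝ³ with d = dist(x_i, x_j), let r_i, r_j > 0 with |r_i - r_j| < d < r_i + r_j, let t_i, t_j ∈ ℝ³ be velocity vectors, and let u_ij = (x_i - x_j)/d. Define R and Φ as functions of the center distance by R(t) = √(2(r_i²r_j² + (r_i² + r_j²)t²) - (r_i⁴ + r_j⁴ + t⁴))/(2t) and Φ(t) = arccos((r_i² + r_j² - t²)/(2 r_i r_j)). Then the functions τ ↦ R(dist(x_i + τ·t_i, x_j + τ·t_j)) and τ ↦ Φ(dist(x_i + τ·t_i, x_j + τ·t_j)) are differentiable at τ = 0 with derivatives R'(d)·⟨u_ij, t_i - t_j⟩ and Φ'(d)·⟨u_ij, t_i - t_j⟩ respectively, where R'(d) = ((r_i² - r_j²)² - d⁴)/(2d²·√(2(r_i²r_j² + (r_i² + r_j²)d²) - (r_i⁴ + r_j⁴ + d⁴))) and Φ'(d) = 2d/√(2(r_i² + r_j²)d² - (r_i² - r_j²)² - d⁴). (Lemma: Derivatives of r_ij and of φ_ij.) -/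
open Real RealInnerProductSpace

/-
The centre distance `ρ(τ) = ‖(xᵢ - xⱼ) + τ (tᵢ - tⱼ)‖` has derivative `⟪u_ij, tᵢ - tⱼ⟫` at `τ = 0`,
so both claims are the chain rule once `R'(d)` and `Φ'(d)` are known. Both are governed by
Heron's quartic `S(t) = 2(rᵢ²rⱼ² + (rᵢ² + rⱼ²)t²) - (rᵢ⁴ + rⱼ⁴ + t⁴)`, which is positive exactly
when `rᵢ, rⱼ, t` are the sides of a nondegenerate triangle: `R(t) = √S(t) / (2t)`, and by the law
of cosines `1 - cos² Φ(t) = S(t) / (2rᵢrⱼ)²`, which turns the derivative of `arccos` into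
`2t / √S(t)`.
-/

section NormDeriv

variable {E : Type*} [NormedAddCommGroup E] [InnerProductSpace ℝ E]

theorem HasDerivAt.norm_of_ne_zero {f : ℝ → E} {f' : E} {x : ℝ} (hf : HasDerivAt f f' x)
    (h0 : f x ≠ 0) : HasDerivAt (fun y => ‖f y‖) (⟪f x, f'⟫ / ‖f x‖) x := by
  have hsq : (fun y => ‖f y‖) = fun y => √(‖f y‖ ^ 2) := by
    funext y; rw [Real.sqrt_sq (norm_nonneg _)]
  rw [hsq]
  convert hf.norm_sq.sqrt (by positivity) using 1
  rw [Real.sqrt_sq (norm_nonneg _)]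
  field_simp

theorem hasDerivAt_dist_add_smul {x y : E} (v w : E) (hxy : x ≠ y) :
    HasDerivAt (fun τ : ℝ => dist (x + τ • v) (y + τ • w)) (⟪x - y, v - w⟫ / dist x y) 0 := by
  have hmove : (fun τ : ℝ => dist (x + τ • v) (y + τ • w)) = fun τ => ‖x - y + τ • (v - w)‖ := by
    funext τ
    rw [dist_eq_norm, smul_sub]
    congr 1
    abel
  have hline : HasDerivAt (fun τ : ℝ => x - y + τ • (v - w)) (v - w) 0 := by
    simpa using ((hasDerivAt_id (0 : ℝ)).smul_const (v - w)).const_add (x - y)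
  rw [hmove]
  simpa [dist_eq_norm] using hline.norm_of_ne_zero (by simpa [sub_eq_zero] using hxy)

end NormDeriv

/-- Heron: sixteen times the squared area of a triangle with sides `a`, `b`, `t`. -/
def heronQuartic (a b t : ℝ) : ℝ :=
  2 * (a ^ 2 * b ^ 2 + (a ^ 2 + b ^ 2) * t ^ 2) - (a ^ 4 + b ^ 4 + t ^ 4)

section Heron

variable {a b t : ℝ}

theorem heronQuartic_eq_mul (a b t : ℝ) :
    heronQuartic a b t = (t ^ 2 - (a - b) ^ 2) * ((a + b) ^ 2 - t ^ 2) := by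
  unfold heronQuartic; ring

theorem heronQuartic_pos (h1 : |a - b| < t) (h2 : t < a + b) : 0 < heronQuartic a b t := by
  have ht : 0 < t := (abs_nonneg _).trans_lt h1
  rw [heronQuartic_eq_mul]
  apply mul_pos
  · nlinarith [sq_abs (a - b), abs_nonneg (a - b)]
  · nlinarith

theorem hasDerivAt_heronQuartic (a b t : ℝ) :
    HasDerivAt (heronQuartic a b) (4 * (a ^ 2 + b ^ 2) * t - 4 * t ^ 3) t := by
  have := ((((hasDerivAt_pow 2 t).const_mul (a ^ 2 + b ^ 2)).const_add
    (a ^ 2 * b ^ 2)).const_mul 2).sub ((hasDerivAt_pow 4 t).const_add (a ^ 4 + b ^ 4))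
  exact this.congr_deriv (by ring)

theorem hasDerivAt_sqrt_heronQuartic_div (hS : 0 < heronQuartic a b t) (ht : t ≠ 0) :
    HasDerivAt (fun s => √(heronQuartic a b s) / (2 * s))
      (((a ^ 2 - b ^ 2) ^ 2 - t ^ 4) / (2 * t ^ 2 * √(heronQuartic a b t))) t := by
  have hsqrt := (hasDerivAt_heronQuartic a b t).sqrt hS.ne'
  have hsq : √(heronQuartic a b t) ^ 2 = heronQuartic a b t := Real.sq_sqrt hS.le
  have hpos : 0 < √(heronQuartic a b t) := Real.sqrt_pos.2 hS
  refine (hsqrt.div ((hasDerivAt_id' t).const_mul 2) (mul_ne_zero two_ne_zero ht)).congr_deriv ?_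
  generalize √(heronQuartic a b t) = r at hsq hpos ⊢
  unfold heronQuartic at hsq
  field_simp
  linear_combination (-2) * hsq

theorem one_sub_sq_lawOfCosines (ha : a ≠ 0) (hb : b ≠ 0) :
    1 - ((a ^ 2 + b ^ 2 - t ^ 2) / (2 * a * b)) ^ 2 = heronQuartic a b t / (2 * a * b) ^ 2 := by
  unfold heronQuartic
  field_simp
  ring

theorem hasDerivAt_arccos_lawOfCosines (ha : 0 < a) (hb : 0 < b) (hS : 0 < heronQuartic a b t) :
    HasDerivAt (fun s => arccos ((a ^ 2 + b ^ 2 - s ^ 2) / (2 * a * b)))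
      (2 * t / √(heronQuartic a b t)) t := by
  set c := (a ^ 2 + b ^ 2 - t ^ 2) / (2 * a * b)
  have hc : 1 - c ^ 2 = heronQuartic a b t / (2 * a * b) ^ 2 :=
    one_sub_sq_lawOfCosines ha.ne' hb.ne'
  have hc1 : c ^ 2 < 1 := by
    have : 0 < heronQuartic a b t / (2 * a * b) ^ 2 := by positivity
    linarith
  have hcos := ((hasDerivAt_pow 2 t).const_sub (a ^ 2 + b ^ 2)).div_const (2 * a * b)
  refine ((hasDerivAt_arccos (by nlinarith) (by nlinarith)).comp t hcos).congr_deriv ?_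
  rw [hc, Real.sqrt_div' _ (by positivity), Real.sqrt_sq (by positivity)]
  field_simp
  ring

end Heron

/-- **Derivatives of `r_ij` and of `φ_ij`.** Under the motion
`τ ↦ (xᵢ + τ·tᵢ, xⱼ + τ·tⱼ)`, the radius of the intersection circle and the
angle between the outward normals have derivatives `R'(d)·⟪u_ij, tᵢ - tⱼ⟫` and
`Φ'(d)·⟪u_ij, tᵢ - tⱼ⟫` at `τ = 0`. -/
theorem rij_phiij_state_deriv (xi xj ti tj : EuclideanSpace ℝ (Fin 3))
    (ri rj d : ℝ) (hri : 0 < ri) (hrj : 0 < rj) (hd : d = dist xi xj)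
    (h1 : |ri - rj| < d) (h2 : d < ri + rj)
    (R Φ : ℝ → ℝ)
    (hR : R = fun t =>
      Real.sqrt (2 * (ri ^ 2 * rj ^ 2 + (ri ^ 2 + rj ^ 2) * t ^ 2) -
        (ri ^ 4 + rj ^ 4 + t ^ 4)) / (2 * t))
    (hΦ : Φ = fun t => Real.arccos ((ri ^ 2 + rj ^ 2 - t ^ 2) / (2 * ri * rj)))
    (uij : EuclideanSpace ℝ (Fin 3)) (huij : uij = (1 / d) • (xi - xj)) :
    HasDerivAt (fun τ : ℝ => R (dist (xi + τ • ti) (xj + τ • tj)))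
        ((((ri ^ 2 - rj ^ 2) ^ 2 - d ^ 4) /
          (2 * d ^ 2 * Real.sqrt (2 * (ri ^ 2 * rj ^ 2 + (ri ^ 2 + rj ^ 2) * d ^ 2) -
            (ri ^ 4 + rj ^ 4 + d ^ 4)))) * ⟪uij, ti - tj⟫) 0 ∧
      HasDerivAt (fun τ : ℝ => Φ (dist (xi + τ • ti) (xj + τ • tj)))
        ((2 * d /
          Real.sqrt (2 * (ri ^ 2 + rj ^ 2) * d ^ 2 - (ri ^ 2 - rj ^ 2) ^ 2 - d ^ 4)) *
          ⟪uij, ti - tj⟫) 0 := by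
  have hd0 : 0 < d := (abs_nonneg _).trans_lt h1
  have hS : 0 < heronQuartic ri rj d := heronQuartic_pos h1 h2
  have hdist : HasDerivAt (fun τ : ℝ => dist (xi + τ • ti) (xj + τ • tj)) ⟪uij, ti - tj⟫ 0 := by
    have hxy : xi ≠ xj := dist_pos.1 (hd ▸ hd0)
    rw [huij, real_inner_smul_left, hd, one_div_mul_eq_div]
    exact hasDerivAt_dist_add_smul ti tj hxy
  have hdist0 : d = dist (xi + (0 : ℝ) • ti) (xj + (0 : ℝ) • tj) := by simp [hd]
  have hheron : 2 * (ri ^ 2 + rj ^ 2) * d ^ 2 - (ri ^ 2 - rj ^ 2) ^ 2 - d ^ 4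
      = heronQuartic ri rj d := by
    unfold heronQuartic; ring
  subst hR hΦ
  rw [hheron]
  exact ⟨(hasDerivAt_sqrt_heronQuartic_div hS hd0.ne').comp_of_eq 0 hdist hdist0,
    (hasDerivAt_arccos_lawOfCosines hri hrj hS).comp_of_eq 0 hdist hdist0⟩
end

section
/- Let x_i, x_j, x_k, t_i, t_j, t_k ∈ ℝ³ and D ∈ ℝ, and suppose d = ‖x_i - x_j‖ > 0. Set u = (x_i - x_j)/d, ω = ((t_j - t_i) × u)/d, and d' = (x_k - D·x_j + (D - 1)·x_i)/d. Then t_k - t_i - ω × (x_k - x_i) - D·( t_j - t_i - ω × (x_j - x_i) ) = t_k - D·t_j + (D - 1)·t_i - ⟨t_j - t_i, d'⟩·u + ⟨u, d'⟩·(t_j - t_i). (Rewriting of the modified velocity vector T_ijk via the Lagrange triple-product formula.) -/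
open Matrix

theorem smul_cross_eq_cross_smul {R : Type*} [CommRing R] (c : R) (v w : Fin 3 → R) :
    (c • v) ⨯₃ w = v ⨯₃ (c • w) := by
  rw [LinearMap.map_smul₂, LinearMap.map_smul]

theorem modified_motion_rewrite_general (xi xj xk ti tj tk : Fin 3 → ℝ) (D d : ℝ)
    (u ω d' : Fin 3 → ℝ)
    (hω : ω = (1 / d) • ((tj - ti) ⨯₃ u))
    (hd' : d' = (1 / d) • (xk - D • xj + (D - 1) • xi)) :
    tk - ti - ω ⨯₃ (xk - xi) - D • (tj - ti - ω ⨯₃ (xj - xi)) =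
      tk - D • tj + (D - 1) • ti - ((tj - ti) ⬝ᵥ d') • u + (u ⬝ᵥ d') • (tj - ti) := by
  have hω_cross : ω ⨯₃ (xk - D • xj + (D - 1) • xi) = ((tj - ti) ⨯₃ u) ⨯₃ d' := by
    rw [hω, hd', smul_cross_eq_cross_smul]
  calc tk - ti - ω ⨯₃ (xk - xi) - D • (tj - ti - ω ⨯₃ (xj - xi))
      = tk - D • tj + (D - 1) • ti - ω ⨯₃ (xk - D • xj + (D - 1) • xi) := by
        simp only [map_sub, map_add, map_smul]
        module
    _ = tk - D • tj + (D - 1) • ti - ((tj - ti) ⬝ᵥ d') • u + (u ⬝ᵥ d') • (tj - ti) := by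
        rw [hω_cross, cross_cross_eq_smul_sub_smul]
        module

/-- Rewriting of the modified velocity vector `T_ijk` via the Lagrange
triple-product formula, in `ℝ³ = Fin 3 → ℝ` with the Euclidean inner product
(dot product) and the cross product. -/
theorem modified_motion_rewrite (xi xj xk ti tj tk : Fin 3 → ℝ) (D d : ℝ)
    (hd : d = Real.sqrt ((xi - xj) ⬝ᵥ (xi - xj))) (hd0 : 0 < d)
    (u ω d' : Fin 3 → ℝ)
    (hu : u = (1 / d) • (xi - xj))
    (hω : ω = (1 / d) • ((tj - ti) ⨯₃ u))
    (hd' : d' = (1 / d) • (xk - D • xj + (D - 1) • xi)) :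
    tk - ti - ω ⨯₃ (xk - xi) - D • (tj - ti - ω ⨯₃ (xj - xi)) =
      tk - D • tj + (D - 1) • ti - ((tj - ti) ⬝ᵥ d') • u + (u ⬝ᵥ d') • (tj - ti) :=
  modified_motion_rewrite_general xi xj xk ti tj tk D d u ω d' hω hd'
end

section
/- Fix radii r_i, r_j > 0 and weights w_i, w_j ∈ ℝ. For |r_i - r_j| < t < r_i + r_j define ξ_i(t) = (t + (r_i² - r_j²)/t)/2, ξ_j(t) = (t + (r_j² - r_i²)/t)/2, R(t) = √(2(r_i²r_j² + (r_i² + r_j²)t²) - (r_i⁴ + r_j⁴ + t⁴))/(2t), Φ(t) = arccos((r_i² + r_j² - t²)/(2 r_i r_j)), and the weighted mean curvature of the two-ball space-filling diagram M(t) = 2π·w_i·(r_i + ξ_i(t)) + 2π·w_j·(r_j + ξ_j(t)) - π·(w_i + w_j)·R(t)·Φ(t). Then for every such t, M has derivative at t equal to π·w_i·(1 - (r_i² - r_j²)/t²) + π·w_j·(1 - (r_j² - r_i²)/t²) - π·(w_i + w_j)·( R'(t)·Φ(t) + R(t)·Φ'(t) ), where R'(t) = ((r_i² - r_j²)² - t⁴)/(2t²·√(2(r_i²r_j²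 + (r_i² + r_j²)t²) - (r_i⁴ + r_j⁴ + t⁴))) and Φ'(t) = 2t/√(2(r_i² + r_j²)t² - (r_i² - r_j²)² - t⁴). (Two-ball instance of the Gradient of Weighted Mean Curvature theorem.) -/
/-!
The two centers and a point of the intersection circle span a triangle with sides `rᵢ`, `rⱼ`, `t`:
`R(t)` is its height over the side `t` and `Φ(t)` its angle opposite `t` (law of cosines). The
radicand in `R` is `16 · area²`, which is also `(2 rᵢ rⱼ)² (1 - cos² Φ)`, so one square root
governs the derivatives of both `R` and `Φ`; the rest is the product and chain rules.
-/

open Real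

/-- Sixteen times the squared area of a triangle with sides `a`, `b`, `t` (Heron's formula). -/
def heronDiscr (a b t : ℝ) : ℝ :=
  2 * (a ^ 2 * b ^ 2 + (a ^ 2 + b ^ 2) * t ^ 2) - (a ^ 4 + b ^ 4 + t ^ 4)

theorem heronDiscr_eq_mul (a b t : ℝ) :
    heronDiscr a b t = ((a + b) ^ 2 - t ^ 2) * (t ^ 2 - (a - b) ^ 2) := by
  unfold heronDiscr; ring

theorem heronDiscr_eq_sub (a b t : ℝ) :
    heronDiscr a b t = 2 * (a ^ 2 + b ^ 2) * t ^ 2 - (a ^ 2 - b ^ 2) ^ 2 - t ^ 4 := by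
  unfold heronDiscr; ring

theorem hasDerivAt_heronDiscr (a b t : ℝ) :
    HasDerivAt (heronDiscr a b) (4 * (a ^ 2 + b ^ 2) * t - 4 * t ^ 3) t := by
  have hsq : HasDerivAt (fun t : ℝ => t ^ 2) (2 * t) t := by
    simpa using hasDerivAt_pow 2 t
  have hfourth : HasDerivAt (fun t : ℝ => t ^ 4) (4 * t ^ 3) t := by
    simpa using hasDerivAt_pow 4 t
  refine ((((hsq.const_mul _).const_add _).const_mul 2).sub (hfourth.const_add _)).congr_deriv ?_
  ring

section HeronDiscr

variable {a b t : ℝ}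

theorem heronDiscr_pos (h1 : |a - b| < t) (h2 : t < a + b) : 0 < heronDiscr a b t := by
  have ht : 0 ≤ t := (abs_nonneg _).trans h1.le
  have hlow : (a - b) ^ 2 < t ^ 2 := by
    simpa only [sq_abs] using pow_lt_pow_left₀ h1 (abs_nonneg _) two_ne_zero
  have hhigh : t ^ 2 < (a + b) ^ 2 := pow_lt_pow_left₀ h2 ht two_ne_zero
  rw [heronDiscr_eq_mul]
  exact mul_pos (by linarith) (by linarith)

theorem hasDerivAt_sqrt_heronDiscr_div (hD : 0 < heronDiscr a b t) (ht : t ≠ 0) :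
    HasDerivAt (fun t => √(heronDiscr a b t) / (2 * t))
      (((a ^ 2 - b ^ 2) ^ 2 - t ^ 4) / (2 * t ^ 2 * √(heronDiscr a b t))) t := by
  have hs2 : √(heronDiscr a b t) ^ 2 = heronDiscr a b t := sq_sqrt hD.le
  have hdouble : HasDerivAt (fun t : ℝ => 2 * t) 2 t := by
    simpa using (hasDerivAt_id t).const_mul 2
  refine (((hasDerivAt_heronDiscr a b t).sqrt hD.ne').div hdouble
    (mul_ne_zero two_ne_zero ht)).congr_deriv ?_
  field_simp
  unfold heronDiscr at hs2 ⊢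
  linear_combination (-2) * hs2

theorem one_sub_sq_cosine_rule (hab : 0 < a * b) :
    1 - ((a ^ 2 + b ^ 2 - t ^ 2) / (2 * a * b)) ^ 2 = heronDiscr a b t / (2 * a * b) ^ 2 := by
  have ha : a ≠ 0 := left_ne_zero_of_mul hab.ne'
  have hb : b ≠ 0 := right_ne_zero_of_mul hab.ne'
  unfold heronDiscr
  field_simp
  ring

theorem hasDerivAt_arccos_cosine_rule (hab : 0 < a * b) (hD : 0 < heronDiscr a b t) :
    HasDerivAt (fun t => arccos ((a ^ 2 + b ^ 2 - t ^ 2) / (2 * a * b)))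
      (2 * t / √(heronDiscr a b t)) t := by
  set u := (a ^ 2 + b ^ 2 - t ^ 2) / (2 * a * b)
  have ha : a ≠ 0 := left_ne_zero_of_mul hab.ne'
  have hb : b ≠ 0 := right_ne_zero_of_mul hab.ne'
  have h2ab : 0 < 2 * a * b := by rw [mul_assoc]; positivity
  have hsqrt : √(1 - u ^ 2) = √(heronDiscr a b t) / (2 * a * b) := by
    rw [one_sub_sq_cosine_rule hab, sqrt_div hD.le, sqrt_sq h2ab.le]
  have hu : |u| < 1 := by
    rw [← sq_lt_one_iff_abs_lt_one]
    have : 0 < 1 - u ^ 2 := by rw [one_sub_sq_cosine_rule hab]; positivity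
    linarith
  obtain ⟨hu_lo, hu_hi⟩ := abs_lt.mp hu
  have hud : HasDerivAt (fun t : ℝ => (a ^ 2 + b ^ 2 - t ^ 2) / (2 * a * b))
      (-(2 * t) / (2 * a * b)) t := by
    simpa using ((hasDerivAt_pow 2 t).const_sub (a ^ 2 + b ^ 2)).div_const (2 * a * b)
  refine ((hasDerivAt_arccos hu_lo.ne' hu_hi.ne).comp t hud).congr_deriv ?_
  rw [hsqrt]
  field_simp

end HeronDiscr

theorem hasDerivAt_half_add_div (c : ℝ) {t : ℝ} (ht : t ≠ 0) :
    HasDerivAt (fun t => (t + c / t) / 2) ((1 - c / t ^ 2) / 2) t := by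
  refine (((hasDerivAt_id' t).add ((hasDerivAt_const t c).div (hasDerivAt_id' t) ht)).div_const
    2).congr_deriv ?_
  ring

/-- Two-ball instance of the Gradient of Weighted Mean Curvature theorem: the
derivative of the weighted mean curvature `M(t)` of the space-filling diagram of
two overlapping balls with respect to the center distance `t`. -/
theorem weighted_mean_curvature_two_balls_deriv (ri rj wi wj : ℝ)
    (hri : 0 < ri) (hrj : 0 < rj)
    (ξi ξj R Φ M : ℝ → ℝ)
    (hξi : ξi = fun t => (t + (ri ^ 2 - rj ^ 2) / t) / 2)
    (hξj : ξj = fun t => (t + (rj ^ 2 - ri ^ 2) / t) / 2)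
    (hR : R = fun t =>
      Real.sqrt (2 * (ri ^ 2 * rj ^ 2 + (ri ^ 2 + rj ^ 2) * t ^ 2) -
        (ri ^ 4 + rj ^ 4 + t ^ 4)) / (2 * t))
    (hΦ : Φ = fun t => Real.arccos ((ri ^ 2 + rj ^ 2 - t ^ 2) / (2 * ri * rj)))
    (hM : M = fun t => 2 * π * wi * (ri + ξi t) + 2 * π * wj * (rj + ξj t) -
      π * (wi + wj) * R t * Φ t)
    (t : ℝ) (h1 : |ri - rj| < t) (h2 : t < ri + rj) :
    HasDerivAt M
      (π * wi * (1 - (ri ^ 2 - rj ^ 2) / t ^ 2) +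
        π * wj * (1 - (rj ^ 2 - ri ^ 2) / t ^ 2) -
        π * (wi + wj) *
          ((((ri ^ 2 - rj ^ 2) ^ 2 - t ^ 4) /
              (2 * t ^ 2 * Real.sqrt (2 * (ri ^ 2 * rj ^ 2 + (ri ^ 2 + rj ^ 2) * t ^ 2) -
                (ri ^ 4 + rj ^ 4 + t ^ 4)))) * Φ t +
            R t * (2 * t /
              Real.sqrt (2 * (ri ^ 2 + rj ^ 2) * t ^ 2 - (ri ^ 2 - rj ^ 2) ^ 2 - t ^ 4)))) t := by
  subst hξi hξj hR hΦ hM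
  have ht : t ≠ 0 := ((abs_nonneg _).trans_lt h1).ne'
  have hD := heronDiscr_pos h1 h2
  have hξi' := ((hasDerivAt_half_add_div (ri ^ 2 - rj ^ 2) ht).const_add ri).const_mul (2 * π * wi)
  have hξj' := ((hasDerivAt_half_add_div (rj ^ 2 - ri ^ 2) ht).const_add rj).const_mul (2 * π * wj)
  have hR' := (hasDerivAt_sqrt_heronDiscr_div hD ht).const_mul (π * (wi + wj))
  have hΦ' := hasDerivAt_arccos_cosine_rule (mul_pos hri hrj) hD
  rw [heronDiscr_eq_sub] at hΦ'
  unfold heronDiscr at hR'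
  refine ((hξi'.add hξj').sub (hR'.mul hΦ')).congr_deriv ?_
  ring
end

section
/- Fix radii r_i, r_j > 0 and weights w_i, w_j ∈ ℝ, and define M(t) = 2π·w_i·(r_i + ξ_i(t)) + 2π·w_j·(r_j + ξ_j(t)) - π·(w_i + w_j)·R(t)·Φ(t) for |r_i - r_j| < t < r_i + r_j, where ξ_i(t) = (t + (r_i² - r_j²)/t)/2, ξ_j(t) = (t + (r_j² - r_i²)/t)/2, R(t) = √(2(r_i²r_j² + (r_i² + r_j²)t²) - (r_i⁴ + r_j⁴ + t⁴))/(2t), and Φ(t) = arccos((r_i² + r_j² - t²)/(2 r_i r_j)). Then M(t) tends to 4π·(w_i·r_i + w_j·r_j) as t tends to r_i + r_j from the left; that is, the weighted mean curvature of the two-ball space-filling diagram is continuous at the moment the two spheres kiss, where its value equals that of two disjoint spheres. -/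
/-!
The formula for `M` extends continuously to `t = rᵢ + rⱼ`: the only singularities are the
divisions by `t` and `2 rᵢ rⱼ`, both nonzero there. At the kissing distance the radicand of `R`,
which factors as `(t² - (rᵢ - rⱼ)²)((rᵢ + rⱼ)² - t²)`, vanishes, so the lens term disappears,
while `ξᵢ = rᵢ` and `ξⱼ = rⱼ`; hence the limit is `2π wᵢ (2 rᵢ) + 2π wⱼ (2 rⱼ)`.
-/

open Real Filter

lemma intersection_radicand_eq_mul (a b t : ℝ) :
    2 * (a ^ 2 * b ^ 2 + (a ^ 2 + b ^ 2) * t ^ 2) - (a ^ 4 + b ^ 4 + t ^ 4) =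
      (t ^ 2 - (a - b) ^ 2) * ((a + b) ^ 2 - t ^ 2) := by
  ring

lemma intersection_radicand_at_add (a b : ℝ) :
    2 * (a ^ 2 * b ^ 2 + (a ^ 2 + b ^ 2) * (a + b) ^ 2) - (a ^ 4 + b ^ 4 + (a + b) ^ 4) = 0 := by
  rw [intersection_radicand_eq_mul, sub_self, mul_zero]

lemma add_add_sq_sub_sq_div_add_div_two {a b : ℝ} (h : a + b ≠ 0) :
    (a + b + (a ^ 2 - b ^ 2) / (a + b)) / 2 = a := by
  rw [sq_sub_sq, mul_div_cancel_left₀ _ h]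
  ring

/-- The weighted mean curvature of the two-ball space-filling diagram is
continuous at the moment the two spheres kiss: `M(t) → 4π(wᵢrᵢ + wⱼrⱼ)` as
`t → (rᵢ + rⱼ)⁻` within `(|rᵢ - rⱼ|, rᵢ + rⱼ)`. -/
theorem weighted_mean_curvature_continuous_at_kiss (ri rj wi wj : ℝ)
    (hri : 0 < ri) (hrj : 0 < rj)
    (ξi ξj R Φ M : ℝ → ℝ)
    (hξi : ξi = fun t => (t + (ri ^ 2 - rj ^ 2) / t) / 2)
    (hξj : ξj = fun t => (t + (rj ^ 2 - ri ^ 2) / t) / 2)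
    (hR : R = fun t =>
      Real.sqrt (2 * (ri ^ 2 * rj ^ 2 + (ri ^ 2 + rj ^ 2) * t ^ 2) -
        (ri ^ 4 + rj ^ 4 + t ^ 4)) / (2 * t))
    (hΦ : Φ = fun t => Real.arccos ((ri ^ 2 + rj ^ 2 - t ^ 2) / (2 * ri * rj)))
    (hM : M = fun t => 2 * π * wi * (ri + ξi t) + 2 * π * wj * (rj + ξj t) -
      π * (wi + wj) * R t * Φ t) :
    Tendsto M (nhdsWithin (ri + rj) (Set.Ioo |ri - rj| (ri + rj)))
      (nhds (4 * π * (wi * ri + wj * rj))) := by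
  have hsum : ri + rj ≠ 0 := by positivity
  have hsum' : rj + ri ≠ 0 := by rwa [add_comm]
  have htwice : 2 * (ri + rj) ≠ 0 := by positivity
  have hcont : ContinuousAt M (ri + rj) := by
    have harccos : Continuous Φ := hΦ ▸ continuous_arccos.comp (by fun_prop)
    rw [hM, hξi, hξj, hR]
    fun_prop (disch := assumption)
  have hvalue : M (ri + rj) = 4 * π * (wi * ri + wj * rj) := by
    simp only [hM, hξi, hξj, hR, intersection_radicand_at_add, sqrt_zero, zero_div,
      mul_zero, zero_mul, sub_zero, add_add_sq_sub_sq_div_add_div_two hsum]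
    rw [add_comm ri rj, add_add_sq_sub_sq_div_add_div_two hsum']
    ring
  exact hvalue ▸ hcont.continuousWithinAt
end

section
/- Fix radii r_i, r_j > 0 and let R(t) = √(2(r_i²r_j² + (r_i² + r_j²)t²) - (r_i⁴ + r_j⁴ + t⁴))/(2t) be the radius of the intersection circle of two spheres of radii r_i, r_j at center distance t, defined for |r_i - r_j| < t < r_i + r_j. Then R(r_i + r_j - ε)/√ε tends to √(2·r_i·r_j/(r_i + r_j)) as ε tends to 0 from the right. (Consequently, near the moment two spheres kiss, the intersection radius grows like √ε, which underlies the square-root behavior of the mean curvature in Case C₁.) -/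
open Real Filter Topology

/-!
Heron's factorisation of the radicand shows that at `t = rᵢ + rⱼ - ε` it equals `ε` times
`(2(rᵢ + rⱼ) - ε)(2rᵢ - ε)(2rⱼ - ε)`. Pulling `√ε` out of the square root leaves a function
that is continuous at `ε = 0`, and its value there is `√(2rᵢrⱼ/(rᵢ + rⱼ))`.
-/

noncomputable def intersectionRadius (a b t : ℝ) : ℝ :=
  √(2 * (a ^ 2 * b ^ 2 + (a ^ 2 + b ^ 2) * t ^ 2) - (a ^ 4 + b ^ 4 + t ^ 4)) / (2 * t)

lemma intersectionRadius_radicand_eq_heron (a b t : ℝ) :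
    2 * (a ^ 2 * b ^ 2 + (a ^ 2 + b ^ 2) * t ^ 2) - (a ^ 4 + b ^ 4 + t ^ 4) =
      (a + b + t) * (a + b - t) * (t + a - b) * (t - a + b) := by
  ring

lemma intersectionRadius_sub_div_sqrt (a b : ℝ) {ε : ℝ} (hε : 0 < ε) :
    intersectionRadius a b (a + b - ε) / √ε =
      √((2 * (a + b) - ε) * (2 * a - ε) * (2 * b - ε)) / (2 * (a + b - ε)) := by
  have hradicand : (a + b + (a + b - ε)) * (a + b - (a + b - ε)) * (a + b - ε + a - b) *
      (a + b - ε - a + b) = ε * ((2 * (a + b) - ε) * (2 * a - ε) * (2 * b - ε)) := by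
    ring
  rw [intersectionRadius, intersectionRadius_radicand_eq_heron, hradicand,
    Real.sqrt_mul hε.le, div_div, mul_comm √ε, mul_div_mul_right _ _ (sqrt_pos.2 hε).ne']

lemma tendsto_intersectionRadius_sub_div_sqrt {a b : ℝ} (hab : 0 < a + b) :
    Tendsto (fun ε => intersectionRadius a b (a + b - ε) / √ε) (𝓝[>] 0)
      (𝓝 √(2 * a * b / (a + b))) := by
  set g : ℝ → ℝ := fun ε => √((2 * (a + b) - ε) * (2 * a - ε) * (2 * b - ε)) / (2 * (a + b - ε))
  have hg : ContinuousAt g 0 := by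
    apply ContinuousAt.div (by fun_prop) (by fun_prop)
    simp only [sub_zero]
    positivity
  have hg0 : g 0 = √(2 * a * b / (a + b)) := by
    simp only [g, sub_zero]
    calc √((2 * (a + b)) * (2 * a) * (2 * b)) / (2 * (a + b))
        = √((2 * (a + b)) * (2 * a) * (2 * b)) / √((2 * (a + b)) ^ 2) := by
          rw [Real.sqrt_sq (by positivity)]
      _ = √((2 * (a + b)) * (2 * a) * (2 * b) / (2 * (a + b)) ^ 2) :=
          (Real.sqrt_div' _ (by positivity)).symm
      _ = √(2 * a * b / (a + b)) := by
          congr 1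
          field_simp
  rw [← hg0]
  refine (hg.tendsto.mono_left nhdsWithin_le_nhds).congr' ?_
  filter_upwards [self_mem_nhdsWithin] with ε hε
  exact (intersectionRadius_sub_div_sqrt a b hε).symm

/-- Near the moment two spheres of radii `rᵢ, rⱼ` kiss, the radius of their
intersection circle grows like `√ε`:
`R(rᵢ + rⱼ - ε)/√ε → √(2rᵢrⱼ/(rᵢ + rⱼ))` as `ε → 0⁺`. -/
theorem intersection_radius_sqrt_growth (ri rj : ℝ) (hri : 0 < ri) (hrj : 0 < rj)
    (R : ℝ → ℝ)
    (hR : R = fun t =>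
      Real.sqrt (2 * (ri ^ 2 * rj ^ 2 + (ri ^ 2 + rj ^ 2) * t ^ 2) -
        (ri ^ 4 + rj ^ 4 + t ^ 4)) / (2 * t)) :
    Tendsto (fun ε : ℝ => R (ri + rj - ε) / Real.sqrt ε)
      (nhdsWithin 0 (Set.Ioi 0))
      (nhds (Real.sqrt (2 * ri * rj / (ri + rj)))) := by
  subst hR
  exact tendsto_intersectionRadius_sub_div_sqrt (add_pos hri hrj)
end

section
/- Fix radii r_i, r_j > 0 and weights w_i, w_j ∈ ℝ, and define M(t) = 2π·w_i·(r_i + ξ_i(t)) + 2π·w_j·(r_j + ξ_j(t)) - π·(w_i + w_j)·R(t)·Φ(t) for |r_i - r_j| < t < r_i + r_j, where ξ_i(t) = (t + (r_i² - r_j²)/t)/2, ξ_j(t) = (t + (r_j² - r_i²)/t)/2, R(t) = √(2(r_i²r_j² + (r_i² + r_j²)t²) - (r_i⁴ + r_j⁴ + t⁴))/(2t), and Φ(t) = arccos((r_i² + r_j² - t²)/(2 r_i r_j)). Then ( 4π·(w_i·r_i + w_j·r_j) - M(r_i + r_j - ε) ) / √ε tends to π²·(w_i + w_j)·√(2·r_i·r_j/(r_i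 + r_j)) as ε tends to 0 from the right; that is, in Case C₁ the change in weighted mean curvature satisfies Δmean ~ √ε. -/
/-!
Write `t = rᵢ + rⱼ - ε`. The cap heights `rᵢ - ξᵢ(t) = ε (2rⱼ - ε) / (2t)` and `rⱼ - ξⱼ(t)` are
`O(ε)`, so they contribute nothing after division by `√ε`. By Heron's formula the radicand of
`R(t)` factors as `ε (2(rᵢ + rⱼ) - ε)(2rᵢ - ε)(2rⱼ - ε)`, hence `R(t)/√ε → √(2rᵢrⱼ/(rᵢ + rⱼ))`,
while `Φ(t) → arccos (-1) = π`.
-/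

open Real Filter Topology

namespace SphereIntersection

/-- For spheres of radii `r`, `r'` with centres at distance `t`: `offset` is the signed distance
from the first centre to the plane of the intersection circle, `radius` the radius of that circle
and `angle` the angle between the two radii ending at a point of it. -/
noncomputable def offset (r r' t : ℝ) : ℝ := (t + (r ^ 2 - r' ^ 2) / t) / 2

noncomputable def radius (r r' t : ℝ) : ℝ :=
  √(2 * (r ^ 2 * r' ^ 2 + (r ^ 2 + r' ^ 2) * t ^ 2) - (r ^ 4 + r' ^ 4 + t ^ 4)) / (2 * t)

noncomputable def angle (r r' t : ℝ) : ℝ := arccos ((r ^ 2 + r' ^ 2 - t ^ 2) / (2 * r * r'))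

variable {r r' : ℝ}

theorem sub_offset_eq (r r' : ℝ) {t : ℝ} (ht : t ≠ 0) :
    r - offset r r' t = (r + r' - t) * (t - r + r') / (2 * t) := by
  unfold offset
  field_simp
  ring

theorem heron_radicand_eq (r r' t : ℝ) :
    2 * (r ^ 2 * r' ^ 2 + (r ^ 2 + r' ^ 2) * t ^ 2) - (r ^ 4 + r' ^ 4 + t ^ 4) =
      (r + r' - t) * ((r + r' + t) * (t + r - r') * (t - r + r')) := by
  ring

theorem eventually_pos_and_add_sub_pos (h : 0 < r + r') :
    ∀ᶠ ε in 𝓝[>] (0 : ℝ), 0 < ε ∧ 0 < r + r' - ε := by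
  filter_upwards [Ioo_mem_nhdsGT h] with ε hε
  exact ⟨hε.1, by linarith [hε.2]⟩

theorem tendsto_sub_offset_div_sqrt (h : 0 < r + r') :
    Tendsto (fun ε => (r - offset r r' (r + r' - ε)) / √ε) (𝓝[>] 0) (𝓝 0) := by
  have hlim : Tendsto (fun ε => √ε * ((2 * r' - ε) / (2 * (r + r' - ε)))) (𝓝[>] 0)
      (𝓝 (√0 * ((2 * r' - 0) / (2 * (r + r' - 0))))) :=
    tendsto_nhdsWithin_of_tendsto_nhds <| ContinuousAt.tendsto <|
      continuous_sqrt.continuousAt.mul <| by fun_prop (disch := simp; positivity)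
  rw [sqrt_zero, zero_mul] at hlim
  refine hlim.congr' ?_
  filter_upwards [eventually_pos_and_add_sub_pos h] with ε ⟨hε, ht⟩
  rw [sub_offset_eq r r' ht.ne', eq_div_iff (sqrt_pos.2 hε).ne']
  field_simp
  rw [sq_sqrt hε.le]
  ring

theorem tendsto_radius_div_sqrt (h : 0 < r + r') :
    Tendsto (fun ε => radius r r' (r + r' - ε) / √ε) (𝓝[>] 0)
      (𝓝 √(2 * r * r' / (r + r'))) := by
  set P : ℝ → ℝ := fun ε => (2 * (r + r') - ε) * (2 * r - ε) * (2 * r' - ε)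
  have hlim : Tendsto (fun ε => √(P ε) / (2 * (r + r' - ε))) (𝓝[>] 0)
      (𝓝 (√(P 0) / (2 * (r + r' - 0)))) :=
    tendsto_nhdsWithin_of_tendsto_nhds <| ContinuousAt.tendsto <|
      (continuous_sqrt.continuousAt.comp (by fun_prop)).div (by fun_prop) (by simp; positivity)
  have hP0 : √(P 0) / (2 * (r + r' - 0)) = √(2 * r * r' / (r + r')) := by
    have hsplit : 2 * r * r' / (r + r') = P 0 / (2 * (r + r')) ^ 2 := by
      simp only [P]
      field_simp
      ring
    rw [sub_zero, hsplit, sqrt_div' _ (sq_nonneg _), sqrt_sq (by positivity)]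
  rw [hP0] at hlim
  refine hlim.congr' ?_
  filter_upwards [eventually_pos_and_add_sub_pos h] with ε ⟨hε, _⟩
  have hrad : 2 * (r ^ 2 * r' ^ 2 + (r ^ 2 + r' ^ 2) * (r + r' - ε) ^ 2) -
      (r ^ 4 + r' ^ 4 + (r + r' - ε) ^ 4) = ε * P ε := by
    rw [heron_radicand_eq]
    ring
  rw [radius, hrad, sqrt_mul hε.le, div_right_comm, mul_div_cancel_left₀ _ (sqrt_pos.2 hε).ne']

theorem angle_add_eq_pi (hr : r ≠ 0) (hr' : r' ≠ 0) : angle r r' (r + r') = π := by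
  have hcos : (r ^ 2 + r' ^ 2 - (r + r') ^ 2) / (2 * r * r') = -1 := by
    field_simp
    ring
  rw [angle, hcos, arccos_neg_one]

theorem tendsto_angle (hr : r ≠ 0) (hr' : r' ≠ 0) :
    Tendsto (fun ε => angle r r' (r + r' - ε)) (𝓝[>] 0) (𝓝 π) := by
  have hcont : ContinuousAt (fun ε => angle r r' (r + r' - ε)) 0 := by
    unfold angle
    fun_prop
  simpa [angle_add_eq_pi hr hr'] using hcont.tendsto.mono_left nhdsWithin_le_nhds

end SphereIntersection

open SphereIntersection in
/-- In Case C₁ (two spheres kissing), the change in weighted mean curvature is of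
order `√ε`: `(4π(wᵢrᵢ + wⱼrⱼ) - M(rᵢ + rⱼ - ε))/√ε → π²(wᵢ + wⱼ)·√(2rᵢrⱼ/(rᵢ + rⱼ))`
as `ε → 0⁺`. -/
theorem weighted_mean_curvature_sqrt_change (ri rj wi wj : ℝ)
    (hri : 0 < ri) (hrj : 0 < rj)
    (ξi ξj R Φ M : ℝ → ℝ)
    (hξi : ξi = fun t => (t + (ri ^ 2 - rj ^ 2) / t) / 2)
    (hξj : ξj = fun t => (t + (rj ^ 2 - ri ^ 2) / t) / 2)
    (hR : R = fun t =>
      Real.sqrt (2 * (ri ^ 2 * rj ^ 2 + (ri ^ 2 + rj ^ 2) * t ^ 2) -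
        (ri ^ 4 + rj ^ 4 + t ^ 4)) / (2 * t))
    (hΦ : Φ = fun t => Real.arccos ((ri ^ 2 + rj ^ 2 - t ^ 2) / (2 * ri * rj)))
    (hM : M = fun t => 2 * π * wi * (ri + ξi t) + 2 * π * wj * (rj + ξj t) -
      π * (wi + wj) * R t * Φ t) :
    Tendsto (fun ε : ℝ =>
        (4 * π * (wi * ri + wj * rj) - M (ri + rj - ε)) / Real.sqrt ε)
      (nhdsWithin 0 (Set.Ioi 0))
      (nhds (π ^ 2 * (wi + wj) * Real.sqrt (2 * ri * rj / (ri + rj)))) := by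
  have hs : 0 < ri + rj := by positivity
  have hi := tendsto_sub_offset_div_sqrt (r' := rj) hs
  have hj := tendsto_sub_offset_div_sqrt (r' := ri) (by linarith : 0 < rj + ri)
  rw [add_comm rj ri] at hj
  have hlim := ((tendsto_const_nhds (x := 2 * π * wi)).mul hi).add
    ((tendsto_const_nhds (x := 2 * π * wj)).mul hj) |>.add
    (((tendsto_const_nhds (x := π * (wi + wj))).mul (tendsto_radius_div_sqrt hs)).mul
      (tendsto_angle hri.ne' hrj.ne'))
  convert hlim using 2 with ε
  · subst hξi hξj hR hΦ hM
    simp only [offset, radius, angle]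
    ring
  · ring
end

section
/- Fix radii r_i, r_j > 0 and weights w_i, w_j ∈ ℝ with w_i + w_j > 0, and define M(t) = 2π·w_i·(r_i + ξ_i(t)) + 2π·w_j·(r_j + ξ_j(t)) - π·(w_i + w_j)·R(t)·Φ(t) for |r_i - r_j| < t < r_i + r_j, where ξ_i(t) = (t + (r_i² - r_j²)/t)/2, ξ_j(t) = (t + (r_j² - r_i²)/t)/2, R(t) = √(2(r_i²r_j² + (r_i² + r_j²)t²) - (r_i⁴ + r_j⁴ + t⁴))/(2t), and Φ(t) = arccos((r_i² + r_j² - t²)/(2 r_i r_j)). Then the derivative of M tends to +∞ as t tends to r_i + r_j from the left; that is, in Case C₁ the weighted mean curvature is continuous but the norm of its gradient blows up at the moment two spheres kiss. -/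
/-!
Writing `H(t)` for Heron's expression (sixteen times the squared area of the triangle with sides
`rᵢ, rⱼ, t`), the radius of the intersection circle is `R = √H / (2t)` and the law of cosines gives
`sin Φ = √H / (2 rᵢ rⱼ)`. Hence `M'(t) = π (wᵢ + wⱼ) (t² - rᵢ² - rⱼ²) Φ(t) / √H(t) + B(t)` with `B`
continuous at `rᵢ + rⱼ`. As the balls kiss, `H → 0⁺` while the numerator tends to
`2π² (wᵢ + wⱼ) rᵢ rⱼ > 0`, so `M' → +∞`.
-/

open Real Filter Topology Set

theorem Filter.Tendsto.div_atTop_of_tendsto_nhdsGT_zero {𝕜 α : Type*} [Semifield 𝕜]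
    [LinearOrder 𝕜] [IsStrictOrderedRing 𝕜] [TopologicalSpace 𝕜] [OrderTopology 𝕜]
    {l : Filter α} {f g : α → 𝕜} {C : 𝕜} (hC : 0 < C) (hf : Tendsto f l (𝓝 C))
    (hg : Tendsto g l (𝓝[>] 0)) : Tendsto (fun x => f x / g x) l atTop :=
  (hf.pos_mul_atTop hC hg.inv_tendsto_nhdsGT_zero).congr fun _ => (div_eq_mul_inv _ _).symm

noncomputable section

namespace WeightedMeanCurvature

variable {a b t : ℝ}

def heron (a b t : ℝ) : ℝ :=
  2 * (a ^ 2 * b ^ 2 + (a ^ 2 + b ^ 2) * t ^ 2) - (a ^ 4 + b ^ 4 + t ^ 4)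

def capAngle (a b t : ℝ) : ℝ := arccos ((a ^ 2 + b ^ 2 - t ^ 2) / (2 * a * b))

def meanCurvature (a b wa wb t : ℝ) : ℝ :=
  2 * π * wa * (a + (t + (a ^ 2 - b ^ 2) / t) / 2) +
    2 * π * wb * (b + (t + (b ^ 2 - a ^ 2) / t) / 2) -
    π * (wa + wb) * (√(heron a b t) / (2 * t)) * capAngle a b t

theorem heron_eq_mul (a b t : ℝ) :
    heron a b t = ((a + b) ^ 2 - t ^ 2) * (t ^ 2 - (a - b) ^ 2) := by
  unfold heron; ring

theorem heron_add_self (a b : ℝ) : heron a b (a + b) = 0 := by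
  simp [heron_eq_mul]

theorem heron_pos (ht : t ∈ Ioo |a - b| (a + b)) : 0 < heron a b t := by
  obtain ⟨hlo, hhi⟩ := ht
  have ht0 : 0 < t := (abs_nonneg _).trans_lt hlo
  rw [heron_eq_mul]
  refine mul_pos (by nlinarith) ?_
  rw [sub_pos, ← sq_abs (a - b)]
  exact pow_lt_pow_left₀ hlo (abs_nonneg _) two_ne_zero

theorem hasDerivAt_heron (a b t : ℝ) :
    HasDerivAt (heron a b) (4 * t * (a ^ 2 + b ^ 2 - t ^ 2)) t := by
  have h := (((hasDerivAt_pow 2 t).const_mul (a ^ 2 + b ^ 2)).const_add (a ^ 2 * b ^ 2)).const_mul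
    2 |>.sub ((hasDerivAt_pow 4 t).const_add (a ^ 4 + b ^ 4))
  refine h.congr_deriv ?_
  push_cast; ring

@[fun_prop]
theorem continuous_heron (a b : ℝ) : Continuous (heron a b) := by
  unfold heron; fun_prop

theorem one_sub_sq_cosineLaw (ha : a ≠ 0) (hb : b ≠ 0) :
    1 - ((a ^ 2 + b ^ 2 - t ^ 2) / (2 * a * b)) ^ 2 = heron a b t / (2 * a * b) ^ 2 := by
  unfold heron; field_simp; ring

@[fun_prop]
theorem continuous_capAngle (a b : ℝ) : Continuous (capAngle a b) :=
  continuous_arccos.comp (by fun_prop)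

theorem capAngle_add_self (ha : a ≠ 0) (hb : b ≠ 0) : capAngle a b (a + b) = π := by
  rw [capAngle, ← arccos_neg_one]
  congr 1
  field_simp; ring

theorem hasDerivAt_capAngle (ha : 0 < a) (hb : 0 < b) (ht : 0 < heron a b t) :
    HasDerivAt (capAngle a b) (2 * t / √(heron a b t)) t := by
  set x := (a ^ 2 + b ^ 2 - t ^ 2) / (2 * a * b)
  have hsin : √(1 - x ^ 2) = √(heron a b t) / (2 * a * b) := by
    rw [one_sub_sq_cosineLaw ha.ne' hb.ne', sqrt_div ht.le, sqrt_sq (by positivity)]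
  have hx : x ^ 2 < 1 := by
    have : 0 < 1 - x ^ 2 := by rw [one_sub_sq_cosineLaw ha.ne' hb.ne']; positivity
    linarith
  have hx' : |x| < 1 := by rwa [← sq_lt_one_iff_abs_lt_one]
  have h := (hasDerivAt_arccos (by linarith [neg_abs_le x]) (by linarith [le_abs_self x])).comp t
    (((hasDerivAt_pow 2 t).const_sub (a ^ 2 + b ^ 2)).div_const (2 * a * b))
  refine h.congr_deriv ?_
  rw [hsin]
  have : 0 < √(heron a b t) := sqrt_pos.2 ht
  field_simp
  push_cast; ring

theorem hasDerivAt_sqrt_heron_div (ht : 0 < heron a b t) (ht0 : t ≠ 0) :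
    HasDerivAt (fun t => √(heron a b t) / (2 * t))
      ((a ^ 2 + b ^ 2 - t ^ 2) / √(heron a b t) - √(heron a b t) / (2 * t ^ 2)) t := by
  have h := ((hasDerivAt_heron a b t).sqrt ht.ne').div ((hasDerivAt_id t).const_mul 2)
    (mul_ne_zero two_ne_zero ht0)
  refine h.congr_deriv ?_
  have : 0 < √(heron a b t) := sqrt_pos.2 ht
  simp only [id]
  field_simp
  ring

theorem hasDerivAt_half_add_div (c : ℝ) (ht : t ≠ 0) :
    HasDerivAt (fun t => (t + c / t) / 2) ((1 - c / t ^ 2) / 2) t := by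
  have h := ((hasDerivAt_id t).add ((hasDerivAt_inv ht).const_mul c)).div_const 2
  refine h.congr_deriv ?_
  field_simp
  ring

theorem hasDerivAt_meanCurvature (wa wb : ℝ) (ha : 0 < a) (hb : 0 < b) (ht : 0 < heron a b t)
    (ht0 : t ≠ 0) :
    HasDerivAt (meanCurvature a b wa wb)
      (π * (wa + wb) * (t ^ 2 - a ^ 2 - b ^ 2) * capAngle a b t / √(heron a b t) +
        π / t ^ 2 * ((wb - wa) * (a ^ 2 - b ^ 2) +
          (wa + wb) * √(heron a b t) * capAngle a b t / 2)) t := by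
  have h := ((((hasDerivAt_half_add_div (a ^ 2 - b ^ 2) ht0).const_add a).const_mul
    (2 * π * wa)).add (((hasDerivAt_half_add_div (b ^ 2 - a ^ 2) ht0).const_add b).const_mul
    (2 * π * wb))).sub (((hasDerivAt_sqrt_heron_div ht ht0).const_mul (π * (wa + wb))).mul
    (hasDerivAt_capAngle ha hb ht))
  -- `R · Φ' = (√H / 2t) · (2t / √H) = 1`, so only `R' · Φ` is singular.
  refine h.congr_deriv ?_
  have : 0 < √(heron a b t) := sqrt_pos.2 ht
  field_simp
  ring

theorem tendsto_deriv_meanCurvature_atTop {wa wb : ℝ} (ha : 0 < a) (hb : 0 < b)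
    (hw : 0 < wa + wb) :
    Tendsto (deriv (meanCurvature a b wa wb)) (𝓝[Ioo |a - b| (a + b)] (a + b)) atTop := by
  set l := 𝓝[Ioo |a - b| (a + b)] (a + b)
  have hnum : Tendsto (fun t => π * (wa + wb) * (t ^ 2 - a ^ 2 - b ^ 2) * capAngle a b t) l
      (𝓝 (π * (wa + wb) * (2 * a * b) * π)) := by
    refine ((by fun_prop : Continuous fun t => π * (wa + wb) * (t ^ 2 - a ^ 2 - b ^ 2) *
      capAngle a b t).tendsto' _ _ ?_).mono_left nhdsWithin_le_nhds
    rw [capAngle_add_self ha.ne' hb.ne']; ring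
  have hden : Tendsto (fun t => √(heron a b t)) l (𝓝[>] 0) := by
    refine tendsto_nhdsWithin_iff.2 ⟨?_, ?_⟩
    · refine ((by fun_prop : Continuous fun t => √(heron a b t)).tendsto' _ _ ?_).mono_left
        nhdsWithin_le_nhds
      rw [heron_add_self, sqrt_zero]
    · filter_upwards [self_mem_nhdsWithin] with t ht using sqrt_pos.2 (heron_pos ht)
  have hrest : ContinuousAt (fun t => π / t ^ 2 * ((wb - wa) * (a ^ 2 - b ^ 2) +
      (wa + wb) * √(heron a b t) * capAngle a b t / 2)) (a + b) := by
    fun_prop (disch := positivity)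
  refine ((hnum.div_atTop_of_tendsto_nhdsGT_zero (by positivity) hden).atTop_add
    (hrest.tendsto.mono_left nhdsWithin_le_nhds)).congr' ?_
  filter_upwards [self_mem_nhdsWithin] with t ht
  have ht0 : t ≠ 0 := ((abs_nonneg _).trans_lt ht.1).ne'
  exact ((hasDerivAt_meanCurvature wa wb ha hb (heron_pos ht) ht0).deriv).symm

end WeightedMeanCurvature

end

/-- In Case C₁ the weighted mean curvature is continuous but the norm of its
gradient blows up: the derivative of `M` tends to `+∞` as the center distance `t`
tends to `rᵢ + rⱼ` from the left within `(|rᵢ - rⱼ|, rᵢ + rⱼ)`. -/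
theorem weighted_mean_curvature_deriv_blowup (ri rj wi wj : ℝ)
    (hri : 0 < ri) (hrj : 0 < rj) (hw : 0 < wi + wj)
    (ξi ξj R Φ M : ℝ → ℝ)
    (hξi : ξi = fun t => (t + (ri ^ 2 - rj ^ 2) / t) / 2)
    (hξj : ξj = fun t => (t + (rj ^ 2 - ri ^ 2) / t) / 2)
    (hR : R = fun t =>
      Real.sqrt (2 * (ri ^ 2 * rj ^ 2 + (ri ^ 2 + rj ^ 2) * t ^ 2) -
        (ri ^ 4 + rj ^ 4 + t ^ 4)) / (2 * t))
    (hΦ : Φ = fun t => Real.arccos ((ri ^ 2 + rj ^ 2 - t ^ 2) / (2 * ri * rj)))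
    (hM : M = fun t => 2 * π * wi * (ri + ξi t) + 2 * π * wj * (rj + ξj t) -
      π * (wi + wj) * R t * Φ t) :
    Tendsto (deriv M) (nhdsWithin (ri + rj) (Set.Ioo |ri - rj| (ri + rj)))
      atTop := by
  subst hξi hξj hR hΦ hM
  exact WeightedMeanCurvature.tendsto_deriv_meanCurvature_atTop hri hrj hw
end
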